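/- arXiv:1506.05667 — 2 statements merged into one kernel-verified Lean document; each statement's English description precedes it below -/
import Mathlib

section
/- Let G₁ and G₂ be two connected non-trivial graphs on a common vertex set V and let H be a non-trivial graph. Then any metric generator for the corona product G₁⊙H is also a metric generator for G₂⊙H. -/
open SimpleGraph

/-- `S` is a metric generator for `G`: every pair of distinct vertices is
distinguished by some element of `S` via the shortest-path distance. -/
def IsMetricGen {V : Type*} (G : SimpleGraph V) (S : Set V) : Prop :=
  ∀ u v : V, u ≠ v → ∃ s ∈ S, G.dist s u ≠ G.dist s v

/-- `S` is an adjacency generator for `G`. -/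
def IsAdjGen {V : Type*} (G : SimpleGraph V) (S : Set V) : Prop :=
  ∀ x y : V, x ∉ S → y ∉ S → x ≠ y → ∃ s ∈ S, Xor' (G.Adj s x) (G.Adj s y)

/-- `S` is a simultaneous metric generator for the family `𝒢`. -/
def IsSimMetricGen {V : Type*} (𝒢 : Set (SimpleGraph V)) (S : Set V) : Prop :=
  ∀ G ∈ 𝒢, IsMetricGen G S

/-- `S` is a simultaneous adjacency generator for the family `ℋ`. -/
def IsSimAdjGen {V : Type*} (ℋ : Set (SimpleGraph V)) (S : Set V) : Prop :=
  ∀ H ∈ ℋ, IsAdjGen H S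

/-- The simultaneous metric dimension of a family of graphs. -/
noncomputable def Sd {V : Type*} (𝒢 : Set (SimpleGraph V)) : ℕ :=
  sInf {n | ∃ S : Set V, S.ncard = n ∧ IsSimMetricGen 𝒢 S}

/-- The simultaneous adjacency dimension of a family of graphs. -/
noncomputable def SdA {V : Type*} (ℋ : Set (SimpleGraph V)) : ℕ :=
  sInf {n | ∃ S : Set V, S.ncard = n ∧ IsSimAdjGen ℋ S}

/-- The adjacency dimension of a graph. -/
noncomputable def adjDim {V : Type*} (G : SimpleGraph V) : ℕ := SdA {G}

/-- `B` is an adjacency basis of `G`. -/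
def IsAdjBasis {V : Type*} (G : SimpleGraph V) (B : Set V) : Prop :=
  IsAdjGen G B ∧ B.ncard = adjDim G

/-- `B` is a simultaneous adjacency basis of the family `ℋ`. -/
def IsSimAdjBasis {V : Type*} (ℋ : Set (SimpleGraph V)) (B : Set V) : Prop :=
  IsSimAdjGen ℋ B ∧ B.ncard = SdA ℋ

/-- `D` is a dominating set of `G`. -/
def IsDomSet {V : Type*} (G : SimpleGraph V) (D : Set V) : Prop :=
  ∀ v ∉ D, ∃ u ∈ D, G.Adj u v

/-- `D` is a simultaneous dominating set of the family `𝒢`. -/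
def IsSimDomSet {V : Type*} (𝒢 : Set (SimpleGraph V)) (D : Set V) : Prop :=
  ∀ G ∈ 𝒢, IsDomSet G D

/-- The simultaneous domination number of a family of graphs. -/
noncomputable def Sgamma {V : Type*} (𝒢 : Set (SimpleGraph V)) : ℕ :=
  sInf {n | ∃ D : Set V, D.ncard = n ∧ IsSimDomSet 𝒢 D}

/-- The domination number of a graph. -/
noncomputable def domNum {V : Type*} (G : SimpleGraph V) : ℕ := Sgamma {G}

/-- `γ'(G) = min over vertices `v` of `γ(G - v)`. -/
noncomputable def gammaPrime {V : Type*} (G : SimpleGraph V) : ℕ :=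
  sInf {n | ∃ v : V, n = domNum (G.induce {v}ᶜ)}

/-- The corona product `G ⊙ H`: one copy of `G` together with a copy of `H`
for each vertex `i` of `G`, joining `i` to every vertex of its copy. -/
def corona {V V' : Type*} (G : SimpleGraph V) (H : SimpleGraph V') :
    SimpleGraph (V ⊕ V × V') where
  Adj x y :=
    match x, y with
    | Sum.inl i, Sum.inl j => G.Adj i j
    | Sum.inl i, Sum.inr p => i = p.1
    | Sum.inr p, Sum.inl j => p.1 = j
    | Sum.inr p, Sum.inr q => p.1 = q.1 ∧ H.Adj p.2 q.2
  symm := by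
    refine ⟨?_⟩
    rintro (i | p) (j | q) h
    · exact G.adj_symm h
    · exact h.symm
    · exact h.symm
    · exact ⟨h.1.symm, H.adj_symm h.2⟩
  loopless := by
    refine ⟨?_⟩
    rintro (i | p) h
    · exact G.irrefl h
    · exact H.irrefl h.2

/-- The family `{G ⊙ H : G ∈ 𝒢, H ∈ ℋ}` of corona products. -/
def coronaFam {V V' : Type*} (𝒢 : Set (SimpleGraph V)) (ℋ : Set (SimpleGraph V')) :
    Set (SimpleGraph (V ⊕ V × V')) :=
  {K | ∃ G ∈ 𝒢, ∃ H ∈ ℋ, K = corona G H}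

/-- The join `G + H` of two (vertex-disjoint) graphs. -/
def joinG {V₁ V₂ : Type*} (G : SimpleGraph V₁) (H : SimpleGraph V₂) :
    SimpleGraph (V₁ ⊕ V₂) where
  Adj x y :=
    match x, y with
    | Sum.inl a, Sum.inl b => G.Adj a b
    | Sum.inl _, Sum.inr _ => True
    | Sum.inr _, Sum.inl _ => True
    | Sum.inr a, Sum.inr b => H.Adj a b
  symm := by
    refine ⟨?_⟩
    rintro (a | a) (b | b) h
    · exact G.adj_symm h
    · trivial
    · trivial
    · exact H.adj_symm h
  loopless := by
    refine ⟨?_⟩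
    rintro (a | a) h
    · exact G.irrefl h
    · exact H.irrefl h

/-- The family `{G + H : G ∈ 𝒢, H ∈ ℋ}` of joins. -/
def joinFam {V₁ V₂ : Type*} (𝒢 : Set (SimpleGraph V₁)) (ℋ : Set (SimpleGraph V₂)) :
    Set (SimpleGraph (V₁ ⊕ V₂)) :=
  {K | ∃ G ∈ 𝒢, ∃ H ∈ ℋ, K = joinG G H}

/-- The family `𝒢_B(G)`: all graphs `G'` such that, for some permutation `f` of the
vertex set fixing `B` pointwise, `N_{G'}(x) = f(N_G(x))` for every `x ∈ B`. -/
def GBfam {V : Type*} (G : SimpleGraph V) (B : Set V) : Set (SimpleGraph V) :=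
  {G' | ∃ f : Equiv.Perm V, (∀ x ∈ B, f x = x) ∧
    ∀ x ∈ B, G'.neighborSet x = f '' (G.neighborSet x)}

/-!
In `G ⊙ H` with `G` connected, the copy `H_i` is joined to the rest of the graph only through
the vertex `i`. So every vertex outside `H_i` sees each vertex of `H_i` at distance `d(·, i) + 1`,
while distances inside `H_i` are `0`, `1` or `2` as `H` dictates, independently of `G`. Hence a
metric generator of `G₁ ⊙ H` meets every copy and resolves each pair inside a copy from within
that copy, which works equally in `G₂ ⊙ H`; and a set meeting every copy resolves all other
pairs of `G₂ ⊙ H` by comparing distances to the root of a copy (using a second root when needed).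
-/

namespace SimpleGraph

variable {W : Type*} {G : SimpleGraph W} {A : Set W} {c s t : W}

theorem Walk.mem_support_of_forall_adj_mem (hA : ∀ x ∉ A, ∀ y ∈ A, G.Adj x y → x = c)
    (p : G.Walk s t) (hs : s ∉ A) (ht : t ∈ A) : c ∈ p.support := by
  obtain ⟨d, hd, hfst, hsnd⟩ := p.exists_boundary_dart Aᶜ hs (by simpa using ht)
  rw [← hA d.fst hfst d.snd (by simpa using hsnd) d.adj]
  exact p.dart_fst_mem_support_of_mem_darts hd

theorem Reachable.dist_eq_dist_add_one_of_forall_adj_mem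
    (hA : ∀ x ∉ A, ∀ y ∈ A, G.Adj x y → x = c) (hst : G.Reachable s t) (hs : s ∉ A)
    (ht : t ∈ A) (hc : c ∉ A) (hct : G.Adj c t) : G.dist s t = G.dist s c + 1 := by
  classical
  obtain ⟨p, hp⟩ := hst.exists_walk_length_eq_dist
  have hcp := p.mem_support_of_forall_adj_mem hA hs ht
  have hlt : G.dist s c < G.dist s t :=
    hp ▸ (dist_le _).trans_lt (p.length_takeUntil_lt_length hcp fun h => hc (h ▸ ht))
  have hle : G.dist s t ≤ G.dist s c + 1 :=
    dist_eq_one_iff_adj.2 hct ▸ hct.reachable.dist_triangle_right s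
  omega

end SimpleGraph

section Corona

variable {V V' : Type*} {G : SimpleGraph V} {H : SimpleGraph V'}

def coronaInl (G : SimpleGraph V) (H : SimpleGraph V') : G →g corona G H where
  toFun := Sum.inl
  map_rel' h := h

/-- The vertex set `V'_i` of the copy `H_i`. -/
def coronaCopy (V' : Type*) (i : V) : Set (V ⊕ V × V') :=
  Set.range fun w : V' => Sum.inr (i, w)

theorem mem_coronaCopy {i : V} {x : V ⊕ V × V'} :
    x ∈ coronaCopy V' i ↔ ∃ w, x = Sum.inr (i, w) := by
  simp only [coronaCopy, Set.mem_range, eq_comm]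

theorem corona_eq_of_adj_mem_coronaCopy {i : V} :
    ∀ x ∉ coronaCopy V' i, ∀ y ∈ coronaCopy V' i, (corona G H).Adj x y → x = Sum.inl i := by
  rintro (j | ⟨j, u⟩) hx _ ⟨w, rfl⟩ hadj
  · exact congrArg Sum.inl hadj
  · obtain rfl : j = i := hadj.1
    exact absurd ⟨u, rfl⟩ hx

theorem corona_connected (hG : G.Connected) : (corona G H).Connected := by
  have : Nonempty V := hG.nonempty
  have reach_base : ∀ x, ∃ i, (corona G H).Reachable x (Sum.inl i) := by
    rintro (i | ⟨i, w⟩)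
    · exact ⟨i, .rfl⟩
    · exact ⟨i, Adj.reachable (G := corona G H) rfl⟩
  refine ⟨fun x y => ?_⟩
  obtain ⟨i, hi⟩ := reach_base x
  obtain ⟨j, hj⟩ := reach_base y
  exact hi.trans (((hG.preconnected i j).map (coronaInl G H)).trans hj.symm)

theorem corona_dist_inr_of_not_mem_coronaCopy (hG : G.Connected) {i : V} (v : V')
    {s : V ⊕ V × V'} (hs : s ∉ coronaCopy V' i) :
    (corona G H).dist s (Sum.inr (i, v)) = (corona G H).dist s (Sum.inl i) + 1 :=
  ((corona_connected hG) _ _).dist_eq_dist_add_one_of_forall_adj_mem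
    corona_eq_of_adj_mem_coronaCopy hs ⟨v, rfl⟩ (by simp [mem_coronaCopy]) rfl

open Classical in
theorem corona_dist_inr_inr_self (i : V) (w u : V') :
    (corona G H).dist (Sum.inr (i, w)) (Sum.inr (i, u)) =
      if w = u then 0 else if H.Adj w u then 1 else 2 := by
  have hw : (corona G H).Adj (Sum.inr (i, w)) (Sum.inl i) := rfl
  have hu : (corona G H).Adj (Sum.inl i) (Sum.inr (i, u)) := rfl
  split_ifs with hwu hadj
  · rw [hwu, SimpleGraph.dist_self]
  · exact SimpleGraph.dist_eq_one_iff_adj.2 ⟨rfl, hadj⟩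
  · have hlt := (hw.reachable.trans hu.reachable).one_lt_dist_of_ne_of_not_adj
      (by simpa using hwu) (fun h => hadj h.2)
    have hle := SimpleGraph.dist_le (hw.toWalk.append hu.toWalk)
    simp only [SimpleGraph.Walk.length_append, SimpleGraph.Walk.length_cons,
      SimpleGraph.Walk.length_nil] at hle
    omega

theorem corona_dist_inr_inr_self_le_two (i : V) (w u : V') :
    (corona G H).dist (Sum.inr (i, w)) (Sum.inr (i, u)) ≤ 2 := by
  classical
  rw [corona_dist_inr_inr_self]
  split_ifs <;> omega

theorem corona_dist_inr_inl_self (i : V) (w : V') :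
    (corona G H).dist (Sum.inr (i, w)) (Sum.inl i) = 1 :=
  SimpleGraph.dist_eq_one_iff_adj.2 rfl

theorem corona_two_le_dist_inr_inl (hG : G.Connected) {i j : V} (hij : i ≠ j) (w : V') :
    2 ≤ (corona G H).dist (Sum.inr (i, w)) (Sum.inl j) :=
  (corona_connected hG).one_lt_dist_of_ne_of_not_adj Sum.inr_ne_inl hij

theorem corona_dist_inr_inr_of_ne (hG : G.Connected) {i j : V} (hij : i ≠ j) (w v : V') :
    (corona G H).dist (Sum.inr (i, w)) (Sum.inr (j, v)) =
      (corona G H).dist (Sum.inr (i, w)) (Sum.inl j) + 1 :=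
  corona_dist_inr_of_not_mem_coronaCopy hG v (by simpa [mem_coronaCopy] using hij)

theorem mem_coronaCopy_of_corona_dist_ne (hG : G.Connected) {i : V} {u v : V'}
    {s : V ⊕ V × V'}
    (h : (corona G H).dist s (Sum.inr (i, u)) ≠ (corona G H).dist s (Sum.inr (i, v))) :
    s ∈ coronaCopy V' i := by
  by_contra hs
  rw [corona_dist_inr_of_not_mem_coronaCopy hG u hs,
    corona_dist_inr_of_not_mem_coronaCopy hG v hs] at h
  exact h rfl

theorem IsMetricGen.exists_inr_mem [Nontrivial V'] {S : Set (V ⊕ V × V')}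
    (hS : IsMetricGen (corona G H) S) (hG : G.Connected) (i : V) :
    ∃ w, Sum.inr (i, w) ∈ S := by
  obtain ⟨u, v, huv⟩ := exists_pair_ne V'
  obtain ⟨s, hsS, hs⟩ := hS _ _ (by simpa using huv : Sum.inr (i, u) ≠ Sum.inr (i, v))
  obtain ⟨w, rfl⟩ := mem_coronaCopy.1 (mem_coronaCopy_of_corona_dist_ne hG hs)
  exact ⟨w, hsS⟩

theorem IsMetricGen.corona_exists_dist_inr_ne_inr_self {G₁ : SimpleGraph V}
    {S : Set (V ⊕ V × V')} (hS : IsMetricGen (corona G₁ H) S) (hG₁ : G₁.Connected)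
    (G : SimpleGraph V) (i : V) {u v : V'} (huv : u ≠ v) :
    ∃ s ∈ S, (corona G H).dist s (Sum.inr (i, u)) ≠ (corona G H).dist s (Sum.inr (i, v)) := by
  obtain ⟨s, hsS, hs⟩ := hS _ _ (by simpa using huv : Sum.inr (i, u) ≠ Sum.inr (i, v))
  obtain ⟨w, rfl⟩ := mem_coronaCopy.1 (mem_coronaCopy_of_corona_dist_ne hG₁ hs)
  refine ⟨_, hsS, ?_⟩
  simpa only [corona_dist_inr_inr_self] using hs

section MeetsEveryCopy

variable {S : Set (V ⊕ V × V')} (hS : ∀ i, ∃ w, Sum.inr (i, w) ∈ S) (hG : G.Connected)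
include hS hG

theorem corona_exists_dist_inl_ne_inl {i j : V} (hij : i ≠ j) :
    ∃ s ∈ S, (corona G H).dist s (Sum.inl i) ≠ (corona G H).dist s (Sum.inl j) := by
  obtain ⟨w, hw⟩ := hS i
  refine ⟨_, hw, ?_⟩
  have := corona_two_le_dist_inr_inl (H := H) hG hij w
  rw [corona_dist_inr_inl_self]
  omega

theorem corona_exists_dist_inl_ne_inr [Nontrivial V] (i j : V) (v : V') :
    ∃ s ∈ S, (corona G H).dist s (Sum.inl i) ≠ (corona G H).dist s (Sum.inr (j, v)) := by
  by_cases hij : i = j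
  · subst hij
    obtain ⟨k, hk⟩ := exists_ne i
    obtain ⟨w, hw⟩ := hS k
    refine ⟨_, hw, ?_⟩
    rw [corona_dist_inr_inr_of_ne hG hk]
    omega
  · obtain ⟨w, hw⟩ := hS i
    refine ⟨_, hw, ?_⟩
    have := corona_two_le_dist_inr_inl (H := H) hG hij w
    rw [corona_dist_inr_inl_self, corona_dist_inr_inr_of_ne hG hij]
    omega

theorem corona_exists_dist_inr_ne_inr {i j : V} (hij : i ≠ j) (u v : V') :
    ∃ s ∈ S, (corona G H).dist s (Sum.inr (i, u)) ≠ (corona G H).dist s (Sum.inr (j, v)) := by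
  obtain ⟨w, hw⟩ := hS i
  refine ⟨_, hw, ?_⟩
  have := corona_two_le_dist_inr_inl (H := H) hG hij w
  have := corona_dist_inr_inr_self_le_two (G := G) (H := H) i w u
  rw [corona_dist_inr_inr_of_ne hG hij]
  omega

end MeetsEveryCopy

end Corona

theorem statement_0_general {V V' : Type*} [Nontrivial V] [Nontrivial V']
    (G₁ G₂ : SimpleGraph V) (hG₁ : G₁.Connected) (hG₂ : G₂.Connected)
    (H : SimpleGraph V') (S : Set (V ⊕ V × V'))
    (hS : IsMetricGen (corona G₁ H) S) :
    IsMetricGen (corona G₂ H) S := by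
  have hcopies := hS.exists_inr_mem hG₁
  rintro (i | ⟨i, u⟩) (j | ⟨j, v⟩) hxy
  · exact corona_exists_dist_inl_ne_inl hcopies hG₂ fun h => hxy (h ▸ rfl)
  · exact corona_exists_dist_inl_ne_inr hcopies hG₂ i j v
  · obtain ⟨s, hsS, hs⟩ := corona_exists_dist_inl_ne_inr hcopies hG₂ j i u
    exact ⟨s, hsS, hs.symm⟩
  · by_cases hij : i = j
    · subst hij
      exact hS.corona_exists_dist_inr_ne_inr_self hG₁ G₂ i fun h => hxy (h ▸ rfl)
    · exact corona_exists_dist_inr_ne_inr hcopies hG₂ hij u v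

theorem statement_0 {V V' : Type*} [Fintype V] [Fintype V'] [Nontrivial V] [Nontrivial V']
    (G₁ G₂ : SimpleGraph V) (hG₁ : G₁.Connected) (hG₂ : G₂.Connected)
    (H : SimpleGraph V') (S : Set (V ⊕ V × V'))
    (hS : IsMetricGen (corona G₁ H) S) :
    IsMetricGen (corona G₂ H) S :=
  statement_0_general G₁ G₂ hG₁ hG₂ H S hS
end

section
/- Let 𝒢 be a family of connected non-trivial graphs on a common vertex set V. Let ℋ be a family of graphs on a common vertex set V' with |V'| ≥ 7 such that every H ∈ ℋ is a path graph, or a cycle graph, or has diameter D(H) ≥ 6, or has girth g(H) ≥ 5 and minimum degree δ(H) ≥ 3. Let K_t be a complete graph of order t ≥ 2 on a vertex set disjoint from V'. Then Sd_A(𝒢⊙(K_t+ℋ)) = |V| · Sd_A(ℋ) + |V| · (t−1) + Sγ(𝒢). -/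
open SimpleGraph

/-
In a corona `G ⊙ F`, an adjacency generator `S` meets every fibre in an adjacency generator of
`F`, and a vertex `i` of `G` outside `S` whose fibre contains a vertex adjacent to all of `S` there
can only be separated from it by a neighbour of `i` in `S`. Hence `Sd_A(𝒢 ⊙ ℱ) = n·Sd_A(ℱ) + Sγ(𝒢)`
whenever `ℱ` has a dominating simultaneous basis and every generator of `ℱ` without such an outer
common neighbour is larger than a basis. For `ℱ = K_t + ℋ` all this holds with the basis
`(K_t - c₀) ∪ B`, `B` a basis of `ℋ`, provided no vertex of a graph in `ℋ` is adjacent to all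
of `B`. That is where the hypotheses on `ℋ` enter: on `|V'| ≥ 7` vertices `|B| ≥ 3` exceeds the maximum
degree of a path or a cycle, and a vertex adjacent to all of `B` forces diameter at most `5`, or
a cycle of length at most `4` when `δ ≥ 3`.
-/

section Dimension

variable {V : Type*}

lemma SdA_le {ℋ : Set (SimpleGraph V)} {S : Set V} (h : IsSimAdjGen ℋ S) : SdA ℋ ≤ S.ncard :=
  Nat.sInf_le ⟨S, rfl, h⟩

lemma exists_isSimAdjBasis (ℋ : Set (SimpleGraph V)) : ∃ B, IsSimAdjBasis ℋ B := by
  obtain ⟨B, hcard, hB⟩ := Nat.sInf_mem (s := {n | ∃ S : Set V, S.ncard = n ∧ IsSimAdjGen ℋ S})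
    ⟨_, Set.univ, rfl, fun _ _ x _ hx => absurd trivial hx⟩
  exact ⟨B, hB, hcard⟩

lemma Sgamma_le {𝒢 : Set (SimpleGraph V)} {D : Set V} (h : IsSimDomSet 𝒢 D) :
    Sgamma 𝒢 ≤ D.ncard :=
  Nat.sInf_le ⟨D, rfl, h⟩

lemma exists_isSimDomSet_ncard_eq_Sgamma (𝒢 : Set (SimpleGraph V)) :
    ∃ D, IsSimDomSet 𝒢 D ∧ D.ncard = Sgamma 𝒢 := by
  obtain ⟨D, hcard, hD⟩ := Nat.sInf_mem (s := {n | ∃ D : Set V, D.ncard = n ∧ IsSimDomSet 𝒢 D})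
    ⟨_, Set.univ, rfl, fun _ _ v hv => absurd trivial hv⟩
  exact ⟨D, hD, hcard⟩

end Dimension

namespace Set

variable {α β : Type*} [Fintype α]

lemma ncard_eq_sum_ite (s : Set α) [DecidablePred (· ∈ s)] :
    s.ncard = ∑ x, if x ∈ s then 1 else 0 := by
  rw [ncard_eq_toFinset_card', ← Finset.card_filter]
  congr 1
  ext; simp

lemma ncard_sum [Fintype β] (s : Set (α ⊕ β)) :
    s.ncard = (Sum.inl ⁻¹' s).ncard + (Sum.inr ⁻¹' s).ncard := by
  classical
  simp only [ncard_eq_sum_ite, Fintype.sum_sum_type, mem_preimage]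

lemma ncard_eq_sum_ncard_fiber [Fintype β] (s : Set (α × β)) :
    s.ncard = ∑ a, {b | (a, b) ∈ s}.ncard := by
  classical
  simp only [ncard_eq_sum_ite, Fintype.sum_prod_type, mem_ofPred_eq]

end Set

namespace SimpleGraph

variable {V : Type*} {G : SimpleGraph V}

lemma egirth_le_three_of_adj {a b c : V} (hab : G.Adj a b) (hbc : G.Adj b c) (hca : G.Adj c a) :
    G.egirth ≤ 3 := by
  have hcyc : (Walk.cons hab (.cons hbc (.cons hca .nil))).IsCycle :=
    { edges_nodup := by have := hab.ne; have := hbc.ne; have := hca.ne; aesop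
      ne_nil := by aesop
      support_nodup := by have := hab.ne; have := hbc.ne; have := hca.ne; aesop }
  grw [egirth_le_length hcyc]
  simp

lemma egirth_le_four_of_adj {a b c d : V} (hab : G.Adj a b) (hbc : G.Adj b c) (hcd : G.Adj c d)
    (hda : G.Adj d a) (hac : a ≠ c) (hbd : b ≠ d) : G.egirth ≤ 4 := by
  have hcyc : (Walk.cons hab (.cons hbc (.cons hcd (.cons hda .nil)))).IsCycle :=
    { edges_nodup := by
        have := hab.ne; have := hbc.ne; have := hcd.ne; have := hda.ne; aesop
      ne_nil := by aesop
      support_nodup := by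
        have := hab.ne; have := hbc.ne; have := hcd.ne; have := hda.ne; aesop }
  grw [egirth_le_length hcyc]
  simp

lemma Iso.ncard_neighborSet_eq {W : Type*} {G' : SimpleGraph W} (e : G ≃g G') (v : V) :
    (G'.neighborSet (e v)).ncard = (G.neighborSet v).ncard := by
  simp only [← Nat.card_coe_set_eq]
  exact Nat.card_congr (e.mapNeighborSet v).symm

lemma cycleGraph_ncard_neighborSet_le_two {n : ℕ} (v : Fin n) :
    ((cycleGraph n).neighborSet v).ncard ≤ 2 := by
  match n, v with
  | 1, v => simp
  | n + 2, v => exact cycleGraph_neighborSet ▸ Set.ncard_insert_le _ _ |>.trans (by simp)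

lemma pathGraph_ncard_neighborSet_le_two {n : ℕ} (v : Fin n) :
    ((pathGraph n).neighborSet v).ncard ≤ 2 :=
  (Set.ncard_le_ncard fun _ hu => pathGraph_le_cycleGraph hu).trans
    (cycleGraph_ncard_neighborSet_le_two v)

end SimpleGraph

namespace IsAdjGen

variable {V : Type*} {H : SimpleGraph V} {B : Set V}

/-- Outside `B`, a vertex is determined by its neighbours in `B`. -/
lemma card_le_ncard_add_two_pow [Fintype V] (hB : IsAdjGen H B) :
    Fintype.card V ≤ B.ncard + 2 ^ B.ncard := by
  have hinj : Set.InjOn (fun v => B ∩ H.neighborSet v) Bᶜ := by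
    intro x hx y hy hxy
    by_contra hne
    obtain ⟨s, hs, hxor⟩ := hB x y hx hy hne
    have hsx : s ∈ B ∩ H.neighborSet x ↔ H.Adj s x := by simp [hs, adj_comm]
    have hsy : s ∈ B ∩ H.neighborSet y ↔ H.Adj s y := by simp [hs, adj_comm]
    dsimp only at hxy
    rw [hxy] at hsx
    exact (xor_iff_not_iff _ _).mp hxor (hsx.symm.trans hsy)
  have hcompl : Bᶜ.ncard ≤ (𝒫 B).ncard :=
    Set.ncard_le_ncard_of_injOn _ (fun _ _ => Set.inter_subset_left) hinj
  rw [Set.ncard_powerset] at hcompl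
  have := Set.ncard_add_ncard_compl B
  rw [Nat.card_eq_fintype_card] at this
  omega

lemma three_le_ncard [Fintype V] (hB : IsAdjGen H B) (hV : 7 ≤ Fintype.card V) :
    3 ≤ B.ncard := by
  have := hB.card_le_ncard_add_two_pow
  by_contra! h
  interval_cases B.ncard <;> omega

lemma exists_not_adj_of_ncard_neighborSet_le_two [Fintype V] (hB : IsAdjGen H B)
    (hV : 7 ≤ Fintype.card V) {w : V} (hw : (H.neighborSet w).ncard ≤ 2) :
    ∃ b ∈ B, ¬H.Adj b w := by
  by_contra! hall
  have : B.ncard ≤ (H.neighborSet w).ncard :=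
    Set.ncard_le_ncard fun b hb => (hall b hb).symm
  have := hB.three_le_ncard hV
  omega

/-- If `w` is adjacent to all of `B`, the vertices at distance more than `2` from `w` lie outside
`B` and have no neighbour in `B`, so there is at most one of them. -/
lemma ediam_le_five_of_forall_adj (hB : IsAdjGen H B) (hconn : H.Connected) {w : V}
    (hall : ∀ b ∈ B, H.Adj b w) : H.ediam ≤ 5 := by
  set far : Set V := {x | 2 < H.edist x w}
  have hfar : ∀ x ∈ far, x ∉ B ∧ x ≠ w ∧ ∀ b ∈ B, ¬H.Adj b x := by
    intro x hx
    replace hx : 2 < H.edist x w := hx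
    refine ⟨fun hxB => ?_, fun hxw => ?_, fun b hb hbx => ?_⟩
    · rw [edist_eq_one_iff_adj.mpr (hall x hxB)] at hx
      norm_num at hx
    · simp [hxw] at hx
    · have := calc H.edist x w ≤ H.edist x b + H.edist b w := SimpleGraph.edist_triangle
        _ = 2 := by
          rw [edist_eq_one_iff_adj.mpr hbx.symm, edist_eq_one_iff_adj.mpr (hall b hb)]; rfl
      exact (this.trans_lt hx).false
  have hsub : far.Subsingleton := by
    intro x hx y hy
    by_contra hne
    obtain ⟨s, hs, hxor⟩ := hB x y (hfar x hx).1 (hfar y hy).1 hne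
    rcases hxor with ⟨h, -⟩ | ⟨h, -⟩
    · exact (hfar x hx).2.2 s hs h
    · exact (hfar y hy).2.2 s hs h
  have hnear : ∀ x, H.edist x w ≤ 3 := by
    intro x
    by_cases hx : x ∈ far
    · obtain ⟨p⟩ := hconn.preconnected x w
      cases p with
      | nil => exact absurd rfl (hfar _ hx).2.1
      | @cons _ y _ hxy _ =>
        have hy : y ∉ far := fun hy => hxy.ne (hsub hx hy)
        calc H.edist x w ≤ H.edist x y + H.edist y w := SimpleGraph.edist_triangle
          _ ≤ 1 + 2 := add_le_add (edist_eq_one_iff_adj.mpr hxy).le (not_lt.mp hy)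
          _ = 3 := rfl
    · exact (not_lt.mp hx).trans (by norm_num)
  refine ediam_le_of_edist_le fun u v => ?_
  by_cases hu : u ∈ far
  · by_cases hv : v ∈ far
    · simp [hsub hu hv]
    · calc H.edist u v ≤ H.edist u w + H.edist w v := SimpleGraph.edist_triangle
        _ ≤ 3 + 2 := add_le_add (hnear u) (edist_comm ▸ not_lt.mp hv)
        _ = 5 := rfl
  · calc H.edist u v ≤ H.edist u w + H.edist w v := SimpleGraph.edist_triangle
      _ ≤ 2 + 3 := add_le_add (not_lt.mp hu) (edist_comm ▸ hnear v)
      _ = 5 := rfl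

/-- If `w` is adjacent to all of `B`, either two vertices of `B` span a triangle with `w`, or
two further neighbours of `b₀ ∈ B` are told apart by some `s ∈ B`, closing a `4`-cycle through
`w`, `s` and `b₀`. -/
lemma egirth_le_four_of_forall_adj (hB : IsAdjGen H B) {w : V}
    (hall : ∀ b ∈ B, H.Adj b w) {b₀ : V} (hb₀ : b₀ ∈ B) (hdeg : 3 ≤ (H.neighborSet b₀).ncard) :
    H.egirth ≤ 4 := by
  by_cases hindep : ∃ b ∈ B, ∃ b' ∈ B, H.Adj b b'
  · obtain ⟨b, hb, b', hb', hbb'⟩ := hindep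
    exact (egirth_le_three_of_adj hbb' (hall b' hb') (hall b hb).symm).trans (by norm_num)
  push Not at hindep
  have hfin : (H.neighborSet b₀).Finite := Set.finite_of_ncard_pos (by omega)
  have htwo : 1 < (H.neighborSet b₀ \ {w}).ncard := by
    have := Set.pred_ncard_le_ncard_sdiff_singleton (H.neighborSet b₀) w
    omega
  obtain ⟨x₁, x₂, ⟨hx₁, hx₁w⟩, ⟨hx₂, hx₂w⟩, hne⟩ := (Set.one_lt_ncard_iff hfin.sdiff).mp htwo
  obtain ⟨s, hs, hxor⟩ := hB x₁ x₂ (fun h => hindep b₀ hb₀ x₁ h hx₁)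
    (fun h => hindep b₀ hb₀ x₂ h hx₂) hne
  have hsb₀ : s ≠ b₀ := by
    rintro rfl
    rcases hxor with ⟨-, h⟩ | ⟨-, h⟩
    · exact h hx₂
    · exact h hx₁
  rcases hxor with ⟨hsx, -⟩ | ⟨hsx, -⟩
  · exact egirth_le_four_of_adj (hall s hs).symm hsx hx₁.symm (hall b₀ hb₀)
      (Ne.symm hx₁w) hsb₀
  · exact egirth_le_four_of_adj (hall s hs).symm hsx hx₂.symm (hall b₀ hb₀)
      (Ne.symm hx₂w) hsb₀

lemma exists_not_adj [Fintype V] (hB : IsAdjGen H B) (hV : 7 ≤ Fintype.card V)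
    (hH : Nonempty (H ≃g pathGraph (Fintype.card V)) ∨
      Nonempty (H ≃g cycleGraph (Fintype.card V)) ∨
      6 ≤ H.diam ∨ (5 ≤ H.egirth ∧ ∀ v : V, 3 ≤ (H.neighborSet v).ncard))
    (w : V) : ∃ b ∈ B, ¬H.Adj b w := by
  rcases hH with ⟨⟨e⟩⟩ | ⟨⟨e⟩⟩ | hdiam | ⟨hgirth, hdeg⟩
  · exact hB.exists_not_adj_of_ncard_neighborSet_le_two hV
      (e.ncard_neighborSet_eq w ▸ pathGraph_ncard_neighborSet_le_two (e w))
  · exact hB.exists_not_adj_of_ncard_neighborSet_le_two hV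
      (e.ncard_neighborSet_eq w ▸ cycleGraph_ncard_neighborSet_le_two (e w))
  · by_contra! hall
    have : Nonempty V := ⟨w⟩
    have hconn := connected_of_ediam_ne_top (ediam_ne_top_of_diam_ne_zero (G := H) (by omega))
    have : H.diam ≤ 5 := ENat.toNat_le_of_le_natCast (hB.ediam_le_five_of_forall_adj hconn hall)
    omega
  · by_contra! hall
    have := hB.three_le_ncard hV
    obtain ⟨b₀, hb₀⟩ := Set.nonempty_of_ncard_ne_zero (s := B) (by omega)
    have := hgirth.trans (hB.egirth_le_four_of_forall_adj hall hb₀ (hdeg b₀))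
    norm_num at this

end IsAdjGen

section Corona

variable {V W : Type*} {G : SimpleGraph V} {F : SimpleGraph W}

@[simp] lemma corona_adj_inl_inl {i j : V} : (corona G F).Adj (.inl i) (.inl j) ↔ G.Adj i j :=
  Iff.rfl

@[simp] lemma corona_adj_inl_inr {i : V} {p : V × W} :
    (corona G F).Adj (.inl i) (.inr p) ↔ i = p.1 :=
  Iff.rfl

@[simp] lemma corona_adj_inr_inl {p : V × W} {j : V} :
    (corona G F).Adj (.inr p) (.inl j) ↔ p.1 = j :=
  Iff.rfl

@[simp] lemma corona_adj_inr_inr {p q : V × W} :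
    (corona G F).Adj (.inr p) (.inr q) ↔ p.1 = q.1 ∧ F.Adj p.2 q.2 :=
  Iff.rfl

def coronaSet (D : Set V) (A : Set W) : Set (V ⊕ V × W) :=
  Sum.inl '' D ∪ Sum.inr '' (Set.univ ×ˢ A)

@[simp] lemma inl_mem_coronaSet {D : Set V} {A : Set W} {i : V} :
    Sum.inl i ∈ coronaSet D A ↔ i ∈ D := by
  simp [coronaSet]

@[simp] lemma inr_mem_coronaSet {D : Set V} {A : Set W} {p : V × W} :
    Sum.inr p ∈ coronaSet D A ↔ p.2 ∈ A := by
  simp [coronaSet]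

lemma ncard_coronaSet [Fintype V] [Fintype W] (D : Set V) (A : Set W) :
    (coronaSet D A).ncard = Fintype.card V * A.ncard + D.ncard := by
  rw [Set.ncard_sum, Set.ncard_eq_sum_ncard_fiber]
  simp [Set.preimage, add_comm]

lemma isAdjGen_corona_coronaSet {D : Set V} {A : Set W} (hD : IsDomSet G D)
    (hA : IsAdjGen F A) (hAdom : IsDomSet F A) (hAne : A.Nonempty) :
    IsAdjGen (corona G F) (coronaSet D A) := by
  obtain ⟨a, ha⟩ := hAne
  have hub : ∀ i y, .inl i ∉ coronaSet D A → y ∉ coronaSet D A → .inl i ≠ y →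
      ∃ s ∈ coronaSet D A, Xor ((corona G F).Adj s (.inl i)) ((corona G F).Adj s y) := by
    rintro i (j | ⟨j, v⟩) hi - hne
    · refine ⟨.inr (i, a), by simpa, Or.inl ⟨rfl, fun hij => hne (congrArg _ hij)⟩⟩
    · by_cases hij : i = j
      · subst hij
        obtain ⟨d, hd, hdi⟩ := hD i (by simpa using hi)
        refine ⟨.inl d, by simpa, Or.inl ⟨hdi, fun (hdi' : d = i) => hi ?_⟩⟩
        simpa [← hdi'] using hd
      · exact ⟨.inr (i, a), by simpa, Or.inl ⟨rfl, fun h => hij h.1⟩⟩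
  rintro (i | ⟨i, u⟩) y hx hy hne
  · exact hub i y hx hy hne
  rcases y with j | ⟨j, v⟩
  · obtain ⟨s, hs, h⟩ := hub j _ hy hx hne.symm
    exact ⟨s, hs, Or.symm h⟩
  by_cases hij : i = j
  · subst hij
    obtain ⟨b, hb, h⟩ :=
      hA u v (by simpa using hx) (by simpa using hy) (by rintro rfl; exact hne rfl)
    exact ⟨.inr (i, b), by simpa, by simpa using h⟩
  · obtain ⟨b, hb, hbu⟩ := hAdom u (by simpa using hx)
    exact ⟨.inr (i, b), by simpa, Or.inl ⟨⟨rfl, hbu⟩, fun h => hij h.1⟩⟩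

lemma IsAdjGen.corona_fiber {S : Set (V ⊕ V × W)} (hS : IsAdjGen (corona G F) S) (i : V) :
    IsAdjGen F {w | .inr (i, w) ∈ S} := by
  intro x y hx hy hne
  obtain ⟨s, hs, h⟩ := hS (.inr (i, x)) (.inr (i, y)) hx hy (by simpa using hne)
  rcases s with j | ⟨j, w⟩
  · rcases h with ⟨h, h'⟩ | ⟨h, h'⟩ <;> exact absurd h h'
  · obtain rfl : j = i := by rcases h with ⟨h, -⟩ | ⟨h, -⟩ <;> exact h.1
    exact ⟨w, hs, by simpa using h⟩

/-- A vertex `i` of `G` outside `S` and a vertex of its fibre adjacent to all of `S` there can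
only be told apart by a neighbour of `i` in `G`. -/
lemma IsAdjGen.exists_adj_of_corona {S : Set (V ⊕ V × W)} (hS : IsAdjGen (corona G F) S)
    {i : V} (hi : .inl i ∉ S) {u : W} (hu : .inr (i, u) ∉ S)
    (hcommon : ∀ w, .inr (i, w) ∈ S → F.Adj w u) : ∃ j, .inl j ∈ S ∧ G.Adj j i := by
  obtain ⟨s, hs, h⟩ := hS (.inl i) (.inr (i, u)) hi hu (by simp)
  rcases s with j | ⟨j, w⟩
  · refine ⟨j, hs, ?_⟩
    rcases h with ⟨h, -⟩ | ⟨rfl, -⟩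
    · exact h
    · exact absurd hs hi
  · rcases h with ⟨rfl, h⟩ | ⟨h, h'⟩
    · exact absurd ⟨rfl, hcommon w hs⟩ h
    · exact absurd h.1 h'

end Corona

section CoronaFamily

variable {V W : Type*} {𝒢 : Set (SimpleGraph V)} {ℱ : Set (SimpleGraph W)}

def HasOuterCommonNeighbor (ℱ : Set (SimpleGraph W)) (A : Set W) : Prop :=
  ∃ F ∈ ℱ, ∃ u ∉ A, ∀ w ∈ A, F.Adj w u

lemma IsSimAdjGen.corona_fiber {S : Set (V ⊕ V × W)} (hS : IsSimAdjGen (coronaFam 𝒢 ℱ) S)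
    {G : SimpleGraph V} (hG : G ∈ 𝒢) (i : V) : IsSimAdjGen ℱ {w | .inr (i, w) ∈ S} :=
  fun F hF => (hS _ ⟨G, hG, F, hF, rfl⟩).corona_fiber i

lemma IsSimAdjGen.isSimDomSet_corona {S : Set (V ⊕ V × W)}
    (hS : IsSimAdjGen (coronaFam 𝒢 ℱ) S) :
    IsSimDomSet 𝒢 (Sum.inl ⁻¹' S ∪ {i | ¬HasOuterCommonNeighbor ℱ {w | .inr (i, w) ∈ S}}) := by
  intro G hG i hi
  simp only [Set.mem_union, Set.mem_preimage, Set.mem_ofPred_eq, not_or, not_not] at hi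
  obtain ⟨hhub, F, hF, u, hu, hcommon⟩ := hi
  obtain ⟨j, hj, hji⟩ := (hS _ ⟨G, hG, F, hF, rfl⟩).exists_adj_of_corona hhub hu hcommon
  exact ⟨j, Or.inl hj, hji⟩

variable [Fintype V] [Fintype W]

lemma SdA_coronaFam_le {A : Set W} (hA : IsSimAdjGen ℱ A) (hAdom : IsSimDomSet ℱ A)
    (hAne : A.Nonempty) : SdA (coronaFam 𝒢 ℱ) ≤ Fintype.card V * A.ncard + Sgamma 𝒢 := by
  obtain ⟨D, hD, hDcard⟩ := exists_isSimDomSet_ncard_eq_Sgamma 𝒢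
  rw [← hDcard, ← ncard_coronaSet]
  refine SdA_le ?_
  rintro _ ⟨G, hG, F, hF, rfl⟩
  exact isAdjGen_corona_coronaSet (hD G hG) (hA F hF) (hAdom F hF) hAne

/-- The vertices of `G` in `S`, together with those whose fibre has no outer common neighbour
(each costing an extra vertex in that fibre), dominate every graph of `𝒢`. -/
lemma le_SdA_coronaFam (h𝒢 : 𝒢.Nonempty)
    (hlarge : ∀ A, IsSimAdjGen ℱ A → ¬HasOuterCommonNeighbor ℱ A → SdA ℱ < A.ncard) :
    Fintype.card V * SdA ℱ + Sgamma 𝒢 ≤ SdA (coronaFam 𝒢 ℱ) := by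
  classical
  obtain ⟨G, hG⟩ := h𝒢
  obtain ⟨S, hS, hScard⟩ := exists_isSimAdjBasis (coronaFam 𝒢 ℱ)
  set N := {i | ¬HasOuterCommonNeighbor ℱ {w | .inr (i, w) ∈ S}}
  have hfiber : ∀ i, SdA ℱ + (if i ∈ N then 1 else 0) ≤ {w | .inr (i, w) ∈ S}.ncard := by
    intro i
    split_ifs with hi
    · exact hlarge _ (hS.corona_fiber hG i) hi
    · exact SdA_le (hS.corona_fiber hG i)
  have hdom : Sgamma 𝒢 ≤ (Sum.inl ⁻¹' S).ncard + N.ncard :=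
    (Sgamma_le hS.isSimDomSet_corona).trans (Set.ncard_union_le _ _)
  calc Fintype.card V * SdA ℱ + Sgamma 𝒢
      ≤ ∑ i, (SdA ℱ + if i ∈ N then 1 else 0) + (Sum.inl ⁻¹' S).ncard := by
        rw [Finset.sum_add_distrib, ← Set.ncard_eq_sum_ite, Finset.sum_const, Finset.card_univ,
          smul_eq_mul]
        omega
    _ ≤ ∑ i, {w | .inr (i, w) ∈ S}.ncard + (Sum.inl ⁻¹' S).ncard := by
        gcongr with i
        exact hfiber i
    _ = SdA (coronaFam 𝒢 ℱ) := by
        rw [← hScard, Set.ncard_sum S, Set.ncard_eq_sum_ncard_fiber, add_comm]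
        rfl

theorem SdA_coronaFam (h𝒢 : 𝒢.Nonempty) {A : Set W} (hA : IsSimAdjBasis ℱ A)
    (hAdom : IsSimDomSet ℱ A) (hAne : A.Nonempty)
    (hlarge : ∀ A, IsSimAdjGen ℱ A → ¬HasOuterCommonNeighbor ℱ A → SdA ℱ < A.ncard) :
    SdA (coronaFam 𝒢 ℱ) = Fintype.card V * SdA ℱ + Sgamma 𝒢 :=
  (hA.2 ▸ SdA_coronaFam_le hA.1 hAdom hAne).antisymm (le_SdA_coronaFam h𝒢 hlarge)

end CoronaFamily

section Join

variable {T W : Type*} {K : SimpleGraph T} {H : SimpleGraph W}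

@[simp] lemma joinG_adj_inl_inl {a b : T} : (joinG K H).Adj (.inl a) (.inl b) ↔ K.Adj a b :=
  Iff.rfl

@[simp] lemma joinG_adj_inl_inr {a : T} {b : W} : (joinG K H).Adj (.inl a) (.inr b) :=
  trivial

@[simp] lemma joinG_adj_inr_inl {a : W} {b : T} : (joinG K H).Adj (.inr a) (.inl b) :=
  trivial

@[simp] lemma joinG_adj_inr_inr {a b : W} : (joinG K H).Adj (.inr a) (.inr b) ↔ H.Adj a b :=
  Iff.rfl

lemma IsAdjGen.joinG_inr {A : Set (T ⊕ W)} (hA : IsAdjGen (joinG K H) A) :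
    IsAdjGen H (Sum.inr ⁻¹' A) := by
  intro x y hx hy hne
  obtain ⟨s, hs, h⟩ := hA (.inr x) (.inr y) hx hy (by simpa using hne)
  rcases s with c | w
  · rcases h with ⟨-, h⟩ | ⟨-, h⟩ <;> exact absurd trivial h
  · exact ⟨w, hs, h⟩

/-- Two vertices of the complete graph outside `A` have the same neighbours in `A`. -/
lemma IsAdjGen.joinG_top_compl_inl_subsingleton {A : Set (T ⊕ W)}
    (hA : IsAdjGen (joinG (⊤ : SimpleGraph T) H) A) : (Sum.inl ⁻¹' A)ᶜ.Subsingleton := by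
  intro c hc c' hc'
  by_contra hne
  obtain ⟨s, hs, h⟩ := hA (.inl c) (.inl c') hc hc' (by simpa using hne)
  rcases s with d | w
  · have hdc : d ≠ c := by rintro rfl; exact hc hs
    have hdc' : d ≠ c' := by rintro rfl; exact hc' hs
    rcases h with ⟨-, h⟩ | ⟨-, h⟩
    · exact h (by simpa using hdc')
    · exact h (by simpa using hdc)
  · rcases h with ⟨-, h⟩ | ⟨-, h⟩ <;> exact absurd trivial h

lemma isAdjGen_joinG_top {B : Set W} (hB : IsAdjGen H B) (hnot : ∀ w, ∃ b ∈ B, ¬H.Adj b w)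
    (c₀ : T) : IsAdjGen (joinG (⊤ : SimpleGraph T) H) (Sum.inl '' {c₀}ᶜ ∪ Sum.inr '' B) := by
  have hinl : ∀ c, Sum.inl c ∉ Sum.inl '' {c₀}ᶜ ∪ Sum.inr '' B → c = c₀ := by simp
  have hinr : ∀ u, (Sum.inr u : T ⊕ W) ∉ Sum.inl '' {c₀}ᶜ ∪ Sum.inr '' B → u ∉ B := by simp
  rintro (c | u) (c' | v) hx hy hne
  · exact absurd ((hinl c hx).trans (hinl c' hy).symm) (by simpa using hne)
  · obtain ⟨b, hb, hbv⟩ := hnot v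
    exact ⟨.inr b, by simpa, Or.inl ⟨trivial, hbv⟩⟩
  · obtain ⟨b, hb, hbu⟩ := hnot u
    exact ⟨.inr b, by simpa, Or.inr ⟨trivial, hbu⟩⟩
  · obtain ⟨b, hb, h⟩ := hB u v (hinr u hx) (hinr v hy) (by simpa using hne)
    exact ⟨.inr b, by simpa, h⟩

lemma isDomSet_joinG_top {B : Set W} {c₀ c₁ : T} (hc : c₁ ≠ c₀) :
    IsDomSet (joinG (⊤ : SimpleGraph T) H) (Sum.inl '' {c₀}ᶜ ∪ Sum.inr '' B) := by
  rintro (c | u) hx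
  · obtain rfl : c = c₀ := by simpa using hx
    exact ⟨.inl c₁, by simpa, by simpa using hc⟩
  · exact ⟨.inl c₁, by simpa, trivial⟩

lemma ncard_inl_image_union_inr_image [Fintype T] [Fintype W] (C : Set T) (B : Set W) :
    (Sum.inl '' C ∪ Sum.inr '' B).ncard = C.ncard + B.ncard := by
  simp [Set.ncard_sum, Set.preimage_union, Set.preimage_inl_image_inr,
    Set.preimage_inr_image_inl, Set.preimage_image_eq _ Sum.inl_injective,
    Set.preimage_image_eq _ Sum.inr_injective]

variable {ℋ : Set (SimpleGraph W)}

lemma IsSimAdjGen.joinFam_inr {A : Set (T ⊕ W)} (hA : IsSimAdjGen (joinFam {K} ℋ) A) :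
    IsSimAdjGen ℋ (Sum.inr ⁻¹' A) :=
  fun H hH => (hA _ ⟨K, rfl, H, hH, rfl⟩).joinG_inr

lemma isSimDomSet_joinFam_top {B : Set W} {c₀ c₁ : T} (hc : c₁ ≠ c₀) :
    IsSimDomSet (joinFam {⊤} ℋ) (Sum.inl '' {c₀}ᶜ ∪ Sum.inr '' B) := by
  rintro _ ⟨_, rfl, H, -, rfl⟩
  exact isDomSet_joinG_top hc

variable [Fintype T] [Fintype W]

lemma IsSimAdjGen.add_card_sub_one_le_ncard (hℋ : ℋ.Nonempty) {A : Set (T ⊕ W)}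
    (hA : IsSimAdjGen (joinFam {⊤} ℋ) A) :
    SdA ℋ + (Fintype.card T - 1) ≤ A.ncard := by
  obtain ⟨H, hH⟩ := hℋ
  have hcompl := Set.ncard_le_one_iff_subsingleton.mpr
    (hA _ ⟨⊤, rfl, H, hH, rfl⟩).joinG_top_compl_inl_subsingleton
  have hsum := Set.ncard_add_ncard_compl (Sum.inl ⁻¹' A)
  rw [Nat.card_eq_fintype_card] at hsum
  have := SdA_le hA.joinFam_inr
  rw [Set.ncard_sum A]
  omega

/-- A vertex of the complete graph outside `A` is a common neighbour of `A`. -/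
lemma IsSimAdjGen.add_card_le_ncard (hℋ : ℋ.Nonempty) {A : Set (T ⊕ W)}
    (hA : IsSimAdjGen (joinFam {⊤} ℋ) A) (hno : ¬HasOuterCommonNeighbor (joinFam {⊤} ℋ) A) :
    SdA ℋ + Fintype.card T ≤ A.ncard := by
  obtain ⟨H, hH⟩ := hℋ
  have hinl : Sum.inl ⁻¹' A = Set.univ := by
    refine Set.eq_univ_of_forall fun c => by_contra fun hc => hno ?_
    refine ⟨_, ⟨⊤, rfl, H, hH, rfl⟩, .inl c, hc, ?_⟩
    rintro (d | w) hw
    · exact (top_adj d c).mpr (by rintro rfl; exact hc hw)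
    · trivial
  have := SdA_le hA.joinFam_inr
  rw [Set.ncard_sum A, hinl, Set.ncard_univ, Nat.card_eq_fintype_card]
  omega

lemma isSimAdjBasis_joinFam_top (hℋ : ℋ.Nonempty) {B : Set W} (hB : IsSimAdjBasis ℋ B)
    (hnot : ∀ H ∈ ℋ, ∀ w, ∃ b ∈ B, ¬H.Adj b w) (c₀ : T) :
    IsSimAdjBasis (joinFam {⊤} ℋ) (Sum.inl '' {c₀}ᶜ ∪ Sum.inr '' B) := by
  have hgen : IsSimAdjGen (joinFam {⊤} ℋ) (Sum.inl '' {c₀}ᶜ ∪ Sum.inr '' B) := by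
    rintro _ ⟨_, rfl, H, hH, rfl⟩
    exact isAdjGen_joinG_top (hB.1 H hH) (hnot H hH) c₀
  refine ⟨hgen, (SdA_le hgen).antisymm' ?_⟩
  obtain ⟨S, hS, hScard⟩ := exists_isSimAdjBasis (joinFam {(⊤ : SimpleGraph T)} ℋ)
  rw [← hScard, ncard_inl_image_union_inr_image, Set.ncard_compl, Set.ncard_singleton,
    Nat.card_eq_fintype_card, hB.2, add_comm]
  exact hS.add_card_sub_one_le_ncard hℋ

end Join

theorem statement_18_general {V V' : Type*} [Fintype V] [Fintype V']
    (𝒢 : Set (SimpleGraph V)) (h𝒢ne : 𝒢.Nonempty)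
    (hV' : 7 ≤ Fintype.card V')
    (ℋ : Set (SimpleGraph V')) (hℋne : ℋ.Nonempty)
    (hcond : ∀ H ∈ ℋ, Nonempty (H ≃g SimpleGraph.pathGraph (Fintype.card V')) ∨
      Nonempty (H ≃g SimpleGraph.cycleGraph (Fintype.card V')) ∨
      6 ≤ H.diam ∨ (5 ≤ H.egirth ∧ ∀ v : V', 3 ≤ (H.neighborSet v).ncard))
    (t : ℕ) (ht : 2 ≤ t) :
    SdA (coronaFam 𝒢 (joinFam {(⊤ : SimpleGraph (Fin t))} ℋ)) =
      Fintype.card V * SdA ℋ + Fintype.card V * (t - 1) + Sgamma 𝒢 := by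
  obtain ⟨B, hB⟩ := exists_isSimAdjBasis ℋ
  have hnot : ∀ H ∈ ℋ, ∀ w, ∃ b ∈ B, ¬H.Adj b w :=
    fun H hH => (hB.1 H hH).exists_not_adj hV' (hcond H hH)
  let c₀ : Fin t := ⟨0, by omega⟩
  let c₁ : Fin t := ⟨1, ht⟩
  have hc : c₁ ≠ c₀ := by simp [c₀, c₁, Fin.ext_iff]
  have hA := isSimAdjBasis_joinFam_top hℋne hB hnot c₀
  set ℱ := joinFam {(⊤ : SimpleGraph (Fin t))} ℋ
  have hSdA : SdA ℱ = SdA ℋ + (t - 1) := by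
    rw [← hA.2, ncard_inl_image_union_inr_image, Set.ncard_compl, Set.ncard_singleton,
      Nat.card_eq_fintype_card, Fintype.card_fin, hB.2, add_comm]
  have hlarge : ∀ A, IsSimAdjGen ℱ A → ¬HasOuterCommonNeighbor ℱ A → SdA ℱ < A.ncard := by
    intro A hA hno
    have := hA.add_card_le_ncard hℋne hno
    rw [Fintype.card_fin] at this
    omega
  rw [SdA_coronaFam h𝒢ne hA (isSimDomSet_joinFam_top hc) ⟨.inl c₁, Or.inl ⟨c₁, hc, rfl⟩⟩ hlarge,
    hSdA, Nat.mul_add, add_assoc]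

theorem statement_18 {V V' : Type*} [Fintype V] [Nontrivial V] [Fintype V']
    (𝒢 : Set (SimpleGraph V)) (h𝒢ne : 𝒢.Nonempty) (h𝒢 : ∀ G ∈ 𝒢, G.Connected)
    (hV' : 7 ≤ Fintype.card V')
    (ℋ : Set (SimpleGraph V')) (hℋne : ℋ.Nonempty)
    (hcond : ∀ H ∈ ℋ, Nonempty (H ≃g SimpleGraph.pathGraph (Fintype.card V')) ∨
      Nonempty (H ≃g SimpleGraph.cycleGraph (Fintype.card V')) ∨
      6 ≤ H.diam ∨ (5 ≤ H.egirth ∧ ∀ v : V', 3 ≤ (H.neighborSet v).ncard))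
    (t : ℕ) (ht : 2 ≤ t) :
    SdA (coronaFam 𝒢 (joinFam {(⊤ : SimpleGraph (Fin t))} ℋ)) =
      Fintype.card V * SdA ℋ + Fintype.card V * (t - 1) + Sgamma 𝒢 :=
  statement_18_general 𝒢 h𝒢ne hV' ℋ hℋne hcond t ht
end
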